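/- The sequence d_p of first differences of the prefix palindromic length of the Sierpinski word is 3-automatic: d_p = c(ψ^∞(A)), where ψ is the 3-uniform morphism on {A,B,C,D,Ā,B̄,C̄,D̄,S,S'} given by ψ(A)=A B C̄, ψ(B)=B S S, ψ(C)=A B D̄, ψ(D)=D S S', ψ(Ā)=C B̄ Ā, ψ(B̄)=S S B̄, ψ(C̄)=D B̄ Ā, ψ(D̄)=S' S D̄, ψ(S)=S S S, ψ(S')=D S D̄, and c maps A,B,C,D to +1, Ā,B̄,C̄,D̄ to −1, and S,S' to 0. -/

import Mathlib

/-!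
Write `codeSum n` for the sum of the codes of the first `n` letters of `ψ^∞(A)`; we show
`p = codeSum`. Since `p(n)` is the minimum of `p(m) + 1` over the palindromic suffixes `s[m..n)`,
it suffices that every palindromic factor `s[m..n)` satisfies `codeSum n ≤ codeSum m + 1`, with
equality for some palindromic suffix of every nonempty prefix. Both facts are proved by induction
through desubstitution: `s = φ(s)`, `ψ^∞(A)` maps letterwise onto `s`, and a palindrome or run of
`b`'s of length at least two in `s` is, up to its two ends, the `φ`-image of a shorter one. The
inductive invariants only depend on the first and last letters of the factor in `ψ^∞(A)`, so
they are finite tables, checked by `decide`.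
-/

/-- A palindrome: a word equal to its reversal. -/
def IsPal {α : Type*} (w : List α) : Prop := w.reverse = w

/-- Palindromic length: the minimal number of palindromes whose concatenation is `w`. -/
noncomputable def PL {α : Type*} (w : List α) : ℕ :=
  sInf {k | ∃ l : List (List α), l.length = k ∧ (∀ p ∈ l, IsPal p) ∧ l.flatten = w}

/-- The morphism φ : a → aba, b → bbb, with a = false, b = true. -/
def phi (w : List Bool) : List Bool :=
  w.flatMap fun c => if c then [true, true, true] else [false, true, false]

/-- The Sierpinski word, fixed point of φ starting with a: its (n+1)-st letter. -/
def sW (n : ℕ) : Bool := (phi^[n+1] [false]).getD n true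

/-- The prefix s[1..n] of the Sierpinski word. -/
def sPrefix (n : ℕ) : List Bool := (List.range n).map sW

/-- qⱼ(n) = PL(bʲ s[1..n]). -/
noncomputable def qj (j n : ℕ) : ℕ := PL (List.replicate j true ++ sPrefix n)

/-- q(n) = min over j of qⱼ(n). -/
noncomputable def qS (n : ℕ) : ℕ := sInf (Set.range fun j => qj j n)

/-- p(n) = PL(s[1..n]), the prefix palindromic length of the Sierpinski word. -/
noncomputable def pS (n : ℕ) : ℕ := PL (sPrefix n)

/-- The 3-uniform morphism ψ on the alphabet {A,B,C,D,Ā,B̄,C̄,D̄,S,S'}, encoded as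
A = 0, B = 1, C = 2, D = 3, Ā = 4, B̄ = 5, C̄ = 6, D̄ = 7, S = 8, S' = 9:
ψ(A) = A B C̄, ψ(B) = B S S, ψ(C) = A B D̄, ψ(D) = D S S', ψ(Ā) = C B̄ Ā,
ψ(B̄) = S S B̄, ψ(C̄) = D B̄ Ā, ψ(D̄) = S' S D̄, ψ(S) = S S S, ψ(S') = D S D̄. -/
def psi : Fin 10 → List (Fin 10) :=
  ![[0, 1, 6], [1, 8, 8], [0, 1, 7], [3, 8, 9], [2, 5, 4],
    [8, 8, 5], [3, 5, 4], [9, 8, 7], [8, 8, 8], [3, 8, 7]]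

/-- The fixed point ψ^∞(A) of the 3-uniform morphism ψ starting with A:
its n-th letter satisfies w(n) = ψ(w(n / 3))[n % 3]. -/
def psiFix : ℕ → Fin 10
  | 0 => 0
  | n + 1 => (psi (psiFix ((n + 1) / 3))).getD ((n + 1) % 3) 0
decreasing_by exact Nat.div_lt_self (Nat.succ_pos n) (by norm_num)

/-- The coding c: A, B, C, D ↦ +1; Ā, B̄, C̄, D̄ ↦ −1; S, S' ↦ 0. -/
def codeC : Fin 10 → ℤ := ![1, 1, 1, 1, -1, -1, -1, -1, 0, 0]

section PalindromicLength

variable {α : Type*}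

theorem exists_pal_factorization_length_eq_PL (w : List α) :
    ∃ l : List (List α), l.length = PL w ∧ (∀ p ∈ l, IsPal p) ∧ l.flatten = w :=
  Nat.sInf_mem (s := {k | ∃ l : List (List α), l.length = k ∧ (∀ p ∈ l, IsPal p) ∧ l.flatten = w})
    ⟨w.length, w.map ([·]), by simp, by simp [IsPal], by induction w <;> simp_all⟩

theorem PL_flatten_le {l : List (List α)} (hl : ∀ p ∈ l, IsPal p) : PL l.flatten ≤ l.length :=
  Nat.sInf_le ⟨l, rfl, hl, rfl⟩

theorem PL_nil : PL ([] : List α) = 0 :=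
  Nat.le_zero.mp (PL_flatten_le (l := []) (by simp))

theorem PL_append_le {p : List α} (u : List α) (hp : IsPal p) : PL (u ++ p) ≤ PL u + 1 := by
  obtain ⟨l, hlen, hl, rfl⟩ := exists_pal_factorization_length_eq_PL u
  simpa [hlen] using PL_flatten_le (l := l ++ [p]) (by simpa [or_imp, forall_and] using ⟨hl, hp⟩)

/-- The last palindrome of an optimal factorization is nonempty: otherwise dropping it would give
a shorter one. -/
theorem exists_append_pal_PL_lt {w : List α} (hw : w ≠ []) :
    ∃ u p, p ≠ [] ∧ IsPal p ∧ u ++ p = w ∧ PL u < PL w := by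
  obtain ⟨l, hlen, hl, hw'⟩ := exists_pal_factorization_length_eq_PL w
  obtain ⟨l, p, rfl⟩ : ∃ l' p, l = l' ++ [p] := by
    refine ⟨l.dropLast, l.getLast ?_, (List.dropLast_append_getLast _).symm⟩
    rintro rfl
    exact hw hw'.symm
  have hle := PL_flatten_le (l := l) fun q hq => hl q (by simp [hq])
  simp only [List.flatten_append, List.flatten_singleton, List.length_append,
    List.length_singleton] at hw' hlen
  refine ⟨l.flatten, p, ?_, hl p (by simp), hw', by omega⟩
  rintro rfl
  rw [List.append_nil] at hw'
  rw [hw'] at hle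
  omega

end PalindromicLength

section InfiniteWord

variable {α : Type*} (x : ℕ → α)

def factor (m n : ℕ) : List α := ((List.range n).map x).drop m

def IsPalFactor (m n : ℕ) : Prop := ∀ i, m ≤ i → i < n → x i = x (m + n - 1 - i)

variable {x}

theorem isPal_factor_iff {m n : ℕ} : IsPal (factor x m n) ↔ IsPalFactor x m n := by
  have hlen : (factor x m n).length = n - m := by simp [factor]
  have hget : ∀ j (hj : j < (factor x m n).length), (factor x m n)[j] = x (m + j) := by
    simp [factor]
  constructor
  · intro H i hmi hin
    have := List.getElem_of_eq H.symm (i := i - m) (by omega)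
    rw [List.getElem_reverse, hget, hget] at this
    convert this using 2 <;> omega
  · intro H
    refine List.ext_getElem (by simp) fun j h₁ h₂ => ?_
    rw [hlen] at h₂
    rw [List.getElem_reverse, hget, hget, H (m + j) (by omega) (by omega)]
    congr 1
    omega

theorem take_map_range {m n : ℕ} (h : m ≤ n) :
    ((List.range n).map x).take m = (List.range m).map x := by
  rw [← List.map_take, List.take_range, min_eq_left h]

theorem PL_prefix_eq_of_isPalFactor (f : ℕ → ℤ) (hf₀ : f 0 = 0)
    (hle : ∀ m n, m < n → IsPalFactor x m n → f n ≤ f m + 1)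
    (hex : ∀ n, 0 < n → ∃ m < n, IsPalFactor x m n ∧ f n = f m + 1) (n : ℕ) :
    (PL ((List.range n).map x) : ℤ) = f n := by
  induction n using Nat.strong_induction_on with
  | _ n ih =>
    rcases Nat.eq_zero_or_pos n with rfl | hn
    · simp [PL_nil, hf₀]
    apply le_antisymm
    · obtain ⟨m, hmn, hpal, hfm⟩ := hex n hn
      have hsplit : (List.range m).map x ++ factor x m n = (List.range n).map x := by
        rw [← take_map_range hmn.le, factor, List.take_append_drop]
      have := PL_append_le ((List.range m).map x) (isPal_factor_iff.mpr hpal)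
      rw [hsplit] at this
      have := ih m hmn
      omega
    · have hne : (List.range n).map x ≠ [] := List.ne_nil_of_length_pos (by simpa using hn)
      obtain ⟨u, p, hp, hpal, hup, hlt⟩ := exists_append_pal_PL_lt hne
      have hlen := congrArg List.length hup
      simp only [List.length_append, List.length_map, List.length_range] at hlen
      set m := u.length
      have hu : u = (List.range m).map x := by
        rw [← take_map_range (by omega : m ≤ n), ← hup, List.take_left]
      have hp' : p = factor x m n := by rw [factor, ← hup, List.drop_left]
      have hmn : m < n := by have := List.length_pos_of_ne_nil hp; omega
      have := hle m n hmn (isPal_factor_iff.mp (hp' ▸ hpal))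
      have := ih m hmn
      rw [← hu] at this
      omega

end InfiniteWord

theorem List.getElem?_flatMap_of_length_eq {α β : Type*} {k : ℕ} {f : α → List β}
    (hf : ∀ a, (f a).length = k) (l : List α) (q : ℕ) {r : ℕ} (hr : r < k) :
    (l.flatMap f)[k * q + r]? = l[q]?.bind fun a => (f a)[r]? := by
  induction l generalizing q with
  | nil => simp
  | cons a l ih =>
    rw [List.flatMap_cons]
    cases q with
    | zero => simp [List.getElem?_append_left, hf, hr]
    | succ q =>
      rw [List.getElem?_append_right (by rw [hf]; nlinarith), hf,
        show k * (q + 1) + r - k = k * q + r by rw [Nat.mul_succ]; omega, ih]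
      simp

namespace Sierpinski

theorem length_phi_image (c : Bool) :
    (if c then [true, true, true] else [false, true, false]).length = 3 := by
  cases c <;> rfl

theorem length_phi_iterate (k : ℕ) : (phi^[k] [false]).length = 3 ^ k := by
  induction k with
  | zero => rfl
  | succ k ih =>
    rw [Function.iterate_succ_apply', phi, List.length_flatMap, List.map_congr_left
      fun c _ => length_phi_image c, List.map_const', List.sum_replicate, ih, smul_eq_mul, pow_succ]

theorem phi_iterate_prefix_succ (k : ℕ) : phi^[k] [false] <+: phi^[k + 1] [false] := by
  induction k with
  | zero => exact ⟨[true, false], rfl⟩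
  | succ k ih =>
    obtain ⟨t, ht⟩ := ih
    rw [Function.iterate_succ_apply' _ k, Function.iterate_succ_apply' _ (k + 1), ← ht, phi, phi,
      List.flatMap_append]
    exact List.prefix_append _ _

theorem phi_iterate_prefix {k l : ℕ} (h : k ≤ l) : phi^[k] [false] <+: phi^[l] [false] := by
  induction l, h using Nat.le_induction with
  | base => exact List.prefix_refl _
  | succ l _ ih => exact ih.trans (phi_iterate_prefix_succ l)

theorem getElem?_phi_iterate {k n : ℕ} (hn : n < 3 ^ k) : (phi^[k] [false])[n]? = some (sW n) := by
  have prefix_getElem? : ∀ {k l}, k ≤ l → n < 3 ^ k →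
      (phi^[l] [false])[n]? = (phi^[k] [false])[n]? := fun hkl hn => by
    obtain ⟨t, ht⟩ := phi_iterate_prefix hkl
    rw [← ht, List.getElem?_append_left (by rwa [length_phi_iterate])]
  have hn' : n < 3 ^ (n + 1) :=
    (Nat.lt_pow_self (by norm_num)).trans (Nat.pow_lt_pow_succ (by norm_num))
  rw [← prefix_getElem? (le_max_left k (n + 1)) hn, prefix_getElem? (le_max_right k (n + 1)) hn',
    sW, List.getD_eq_getElem?_getD, List.getElem?_eq_getElem (by rwa [length_phi_iterate])]
  rfl

theorem sW_three_mul_add (q : ℕ) {r : ℕ} (hr : r < 3) :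
    sW (3 * q + r) = if r = 1 then true else sW q := by
  have hq : q < 3 ^ q := Nat.lt_pow_self (by norm_num)
  have h := getElem?_phi_iterate (k := q + 1) (n := 3 * q + r) (by rw [pow_succ]; omega)
  rw [Function.iterate_succ_apply', phi, List.getElem?_flatMap_of_length_eq length_phi_image _ _ hr,
    getElem?_phi_iterate hq] at h
  generalize sW q = c at h
  interval_cases r <;> cases c <;> simp_all

theorem sW_three_mul (q : ℕ) : sW (3 * q) = sW q := sW_three_mul_add q (r := 0) (by norm_num)

theorem sW_three_mul_add_one (q : ℕ) : sW (3 * q + 1) = true := sW_three_mul_add q (by norm_num)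

theorem sW_three_mul_add_two (q : ℕ) : sW (3 * q + 2) = sW q := sW_three_mul_add q (by norm_num)

theorem psiFix_zero : psiFix 0 = 0 := by simp [psiFix]

def psiAt (x : Fin 10) (r : ℕ) : Fin 10 := (psi x).getD r 0

theorem psiFix_three_mul_add (k : ℕ) {r : ℕ} (hr : r < 3) :
    psiFix (3 * k + r) = psiAt (psiFix k) r := by
  rcases Nat.eq_zero_or_pos (3 * k + r) with h | h
  · obtain ⟨rfl, rfl⟩ : k = 0 ∧ r = 0 := by omega
    simp [psiFix_zero, psiAt, psi]
  · obtain ⟨n, hn⟩ : ∃ n, 3 * k + r = n + 1 := ⟨3 * k + r - 1, by omega⟩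
    rw [hn, psiFix, psiAt, show (n + 1) / 3 = k by omega, show (n + 1) % 3 = r by omega]

def codeSum (n : ℕ) : ℤ := ∑ i ∈ Finset.range n, codeC (psiFix i)

def headCode (x : Fin 10) (r : ℕ) : ℤ := ∑ i ∈ Finset.range r, codeC (psiAt x i)

theorem headCode_three : ∀ x, headCode x 3 = codeC x := by decide

theorem codeSum_three_mul_add (a : ℕ) {r : ℕ} (hr : r ≤ 3) :
    codeSum (3 * a + r) = codeSum a + headCode (psiFix a) r := by
  have block : ∀ a, ∀ r ≤ 3, codeSum (3 * a + r) = codeSum (3 * a) + headCode (psiFix a) r :=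
    fun a r hr => by
      rw [codeSum, codeSum, Finset.sum_range_add, headCode]
      congr 1
      exact Finset.sum_congr rfl fun i hi => by
        rw [psiFix_three_mul_add a (by simp at hi; omega)]
  have three_mul : ∀ a, codeSum (3 * a) = codeSum a := fun a => by
    induction a with
    | zero => rfl
    | succ a ih =>
      rw [show 3 * (a + 1) = 3 * a + 3 by ring, block a 3 le_rfl, ih, headCode_three, codeSum,
        codeSum, Finset.sum_range_succ]
  rw [block a r hr, three_mul]

theorem codeSum_succ (n : ℕ) : codeSum (n + 1) = codeSum n + codeC (psiFix n) :=
  Finset.sum_range_succ _ _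

def toSierpinski : Fin 10 → Bool :=
  ![false, true, false, false, false, true, false, false, true, false]

theorem sW_eq_toSierpinski (i : ℕ) : sW i = toSierpinski (psiFix i) := by
  induction i using Nat.strong_induction_on with
  | _ i ih =>
    rcases Nat.eq_zero_or_pos i with rfl | hi
    · rw [psiFix_zero]
      rfl
    obtain ⟨q, r, hr, rfl⟩ : ∃ q r, r < 3 ∧ i = 3 * q + r := ⟨i / 3, i % 3, by omega, by omega⟩
    have hproj : ∀ x, ∀ r < 3,
        toSierpinski (psiAt x r) = if r = 1 then true else toSierpinski x := by
      decide
    rw [sW_three_mul_add q hr, psiFix_three_mul_add q hr, hproj _ r hr, ih q (by omega)]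

def adjacentPairs : List (Fin 10 × Fin 10) :=
  [(0, 1), (4, 1), (1, 6), (1, 7), (1, 8), (5, 0), (5, 4), (5, 2), (2, 5), (6, 1), (3, 5), (3, 8),
    (7, 8), (8, 5), (8, 3), (8, 7), (8, 8), (8, 9), (9, 8)]

theorem psiFix_adjacent (k : ℕ) : (psiFix k, psiFix (k + 1)) ∈ adjacentPairs := by
  induction k using Nat.strong_induction_on with
  | _ k ih =>
    obtain ⟨q, r, hr, rfl⟩ : ∃ q r, r < 3 ∧ k = 3 * q + r := ⟨k / 3, k % 3, by omega, by omega⟩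
    rw [psiFix_three_mul_add q hr]
    rcases (by omega : r < 2 ∨ r = 2) with hr2 | rfl
    · have inside : ∀ x, ∀ r < 2, (psiAt x r, psiAt x (r + 1)) ∈ adjacentPairs := by decide
      rw [add_assoc, psiFix_three_mul_add q (by omega)]
      exact inside _ r hr2
    · have across : ∀ x y, (x, y) ∈ adjacentPairs → (psiAt x 2, psiAt y 0) ∈ adjacentPairs := by
        decide
      rw [show 3 * q + 2 + 1 = 3 * (q + 1) + 0 by ring, psiFix_three_mul_add _ (by norm_num)]
      exact across _ _ (ih q (by omega))

def AllB (u v : ℕ) : Prop := ∀ j, u ≤ j → j < v → sW j = true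

theorem AllB.mono {u v u' v' : ℕ} (h : AllB u v) (hu : u ≤ u') (hv : v' ≤ v) : AllB u' v' :=
  fun j h₁ h₂ => h j (hu.trans h₁) (h₂.trans_le hv)

theorem AllB.isPalFactor {u v : ℕ} (h : AllB u v) : IsPalFactor sW u v :=
  fun i h₁ h₂ => by rw [h i h₁ h₂, h _ (by omega) (by omega)]

theorem AllB.three_mul {a b : ℕ} (h : AllB a b) : AllB (3 * a) (3 * b) := fun i h₁ h₂ => by
  obtain ⟨q, r, hr, rfl⟩ : ∃ q r, r < 3 ∧ i = 3 * q + r := ⟨i / 3, i % 3, by omega, by omega⟩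
  rw [sW_three_mul_add q hr]
  split_ifs
  · rfl
  · exact h q (by omega) (by omega)

theorem AllB.of_three_mul_add {a b r t : ℕ} (h : AllB (3 * a + r) (3 * b + t + 1)) (hr : r < 3)
    (hlen : 3 * a + r + 2 ≤ 3 * b + t) : AllB a (b + 1) := fun j h₁ h₂ => by
  rcases h₁.eq_or_lt with rfl | h₁
  · simpa [sW_three_mul_add_two] using h (3 * a + 2) (by omega) (by omega)
  · simpa [sW_three_mul] using h (3 * j) (by omega) (by omega)

theorem isPalFactor_three_mul_add_iff {a b r t : ℕ} (hrt : r + t = 2)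
    (hab : 3 * a + r ≤ 3 * b + t) :
    IsPalFactor sW (3 * a + r) (3 * b + t + 1) ↔ IsPalFactor sW a (b + 1) := by
  constructor
  · intro H j h₁ h₂
    by_cases hj : 3 * j + 2 ≤ 3 * b + t
    · have := H (3 * j + 2) (by omega) (by omega)
      rwa [sW_three_mul_add_two, show 3 * a + r + (3 * b + t + 1) - 1 - (3 * j + 2) =
        3 * (a + (b + 1) - 1 - j) by omega, sW_three_mul] at this
    by_cases hj' : 3 * a + r ≤ 3 * j
    · have := H (3 * j) (by omega) (by omega)
      rwa [sW_three_mul, show 3 * a + r + (3 * b + t + 1) - 1 - 3 * j =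
        3 * (a + (b + 1) - 1 - j) + 2 by omega, sW_three_mul_add_two] at this
    · rw [show a + (b + 1) - 1 - j = j by omega]
  · intro H i h₁ h₂
    obtain ⟨q, s, hs, rfl⟩ : ∃ q s, s < 3 ∧ i = 3 * q + s := ⟨i / 3, i % 3, by omega, by omega⟩
    rw [show 3 * a + r + (3 * b + t + 1) - 1 - (3 * q + s) = 3 * (a + (b + 1) - 1 - q) + (2 - s)
      by omega, sW_three_mul_add q hs, sW_three_mul_add _ (by omega : 2 - s < 3),
      H q (by omega) (by omega)]
    simp only [show 2 - s = 1 ↔ s = 1 by omega]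

theorem sW_eq_true_of_isPalFactor {m n i : ℕ} (H : IsPalFactor sW m n) (h₁ : m ≤ i) (h₂ : i < n)
    (hi : (m + n - 1 - i) % 3 = 1) : sW i = true := by
  rw [H i h₁ h₂, ← Nat.div_add_mod (m + n - 1 - i) 3, hi, sW_three_mul_add_one]

theorem allB_of_isPalFactor_three_mul_three_mul_add_one {a b : ℕ}
    (H : IsPalFactor sW (3 * a) (3 * b + 1)) (hab : a < b) : AllB a (b + 1) := by
  have below : ∀ j, a ≤ j → j < b → sW j = true := fun j h₁ h₂ => by
    simpa [sW_three_mul_add_two] using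
      sW_eq_true_of_isPalFactor H (i := 3 * j + 2) (by omega) (by omega) (by omega)
  intro j h₁ h₂
  rcases (by omega : j < b ∨ j = b) with hj | rfl
  · exact below j h₁ hj
  · have := H (3 * j) (by omega) (by omega)
    rw [sW_three_mul, show 3 * a + (3 * j + 1) - 1 - 3 * j = 3 * a by omega, sW_three_mul] at this
    rw [this, below a le_rfl hab]

theorem allB_of_isPalFactor_three_mul_three_mul_add_two {a b : ℕ}
    (H : IsPalFactor sW (3 * a) (3 * b + 2)) : AllB a (b + 1) := fun j h₁ h₂ => by
  simpa [sW_three_mul] using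
    sW_eq_true_of_isPalFactor H (i := 3 * j) (by omega) (by omega) (by omega)

theorem allB_of_isPalFactor_three_mul_add_one_three_mul_add_three {a b : ℕ}
    (H : IsPalFactor sW (3 * a + 1) (3 * b + 3)) : AllB a (b + 1) := fun j h₁ h₂ => by
  simpa [sW_three_mul_add_two] using
    sW_eq_true_of_isPalFactor H (i := 3 * j + 2) (by omega) (by omega) (by omega)

theorem allB_of_isPalFactor_three_mul_add_one_three_mul_add_one {a b : ℕ}
    (H : IsPalFactor sW (3 * a + 1) (3 * b + 1)) (hab : a < b) :
    AllB (a + 1) (b + 1) ∧ sW a = sW (b - 1) := by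
  refine ⟨fun j h₁ h₂ => ?_, ?_⟩
  · simpa [sW_three_mul] using
      sW_eq_true_of_isPalFactor H (i := 3 * j) (by omega) (by omega) (by omega)
  · have := H (3 * a + 2) (by omega) (by omega)
    rwa [sW_three_mul_add_two, show 3 * a + 1 + (3 * b + 1) - 1 - (3 * a + 2) = 3 * (b - 1) + 2
      by omega, sW_three_mul_add_two] at this

theorem allB_of_isPalFactor_three_mul_add_two_three_mul_add_three {a b : ℕ}
    (H : IsPalFactor sW (3 * a + 2) (3 * b + 3)) (hab : a < b) : AllB a (b + 1) := by
  have above : ∀ j, a < j → j ≤ b → sW j = true := fun j h₁ h₂ => by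
    simpa [sW_three_mul] using
      sW_eq_true_of_isPalFactor H (i := 3 * j) (by omega) (by omega) (by omega)
  intro j h₁ h₂
  rcases h₁.eq_or_lt with rfl | hj
  · have := H (3 * a + 2) (by omega) (by omega)
    rw [sW_three_mul_add_two, show 3 * a + 2 + (3 * b + 3) - 1 - (3 * a + 2) = 3 * b + 2 by omega,
      sW_three_mul_add_two] at this
    rw [this, above b hab le_rfl]
  · exact above j hj (by omega)

theorem allB_of_isPalFactor_three_mul_add_two_three_mul_add_two {a b : ℕ}
    (H : IsPalFactor sW (3 * a + 2) (3 * b + 2)) (hab : a + 2 ≤ b) : AllB a (b + 1) := by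
  have below : ∀ j, a ≤ j → j < b → sW j = true := fun j h₁ h₂ => by
    simpa [sW_three_mul_add_two] using
      sW_eq_true_of_isPalFactor H (i := 3 * j + 2) (by omega) (by omega) (by omega)
  intro j h₁ h₂
  rcases (by omega : j < b ∨ j = b) with hj | rfl
  · exact below j h₁ hj
  · have := H (3 * j) (by omega) (by omega)
    rw [sW_three_mul, show 3 * a + 2 + (3 * j + 2) - 1 - 3 * j = 3 * (a + 1) by omega,
      sW_three_mul] at this
    rw [this, below (a + 1) (by omega) (by omega)]

/-- `runGap x y` (resp. `palGap x y`) bounds from below the drop `codeSum m - codeSum (l + 1)`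
across every run of `b`'s (resp. palindrome) `s[m..l]` whose first and last letters in `ψ^∞(A)`
are `x` and `y`; `none` marks pairs that never occur. -/
def runGap : Fin 10 → Fin 10 → Option ℤ
  | 1, 1 | 1, 8 => some (-1)
  | 8, 8 => some 0
  | 5, 5 | 8, 5 => some 1
  | _, _ => none

def palGap : Fin 10 → Fin 10 → Option ℤ
  | 0, 0 | 0, 4 | 0, 6 | 0, 7 | 1, 1 | 1, 5 | 1, 8 | 2, 2 | 2, 6 | 2, 9 | 3, 3 | 3, 7 | 3, 9
  | 4, 0 | 4, 3 | 5, 1 | 6, 2 | 6, 3 | 7, 3 | 8, 8 | 9, 3 | 9, 9 => some (-1)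
  | 5, 8 | 6, 9 | 8, 1 | 8, 5 | 9, 2 => some 0
  | 2, 4 | 3, 4 | 4, 4 | 5, 5 | 6, 6 | 7, 0 | 7, 2 | 7, 7 | 7, 9 | 9, 6 | 9, 7 => some 1
  | _, _ => none

/-- Pairs of first and last letters that only occur for factors of length one. -/
def runSingle : List (Fin 10 × Fin 10) := [(1, 1), (5, 5)]

def palSingle : List (Fin 10 × Fin 10) := [(0, 0), (4, 4), (7, 7)]

def GapBound (T : Fin 10 → Fin 10 → Option ℤ) (S : List (Fin 10 × Fin 10)) (m l : ℕ) : Prop :=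
  (∃ g ∈ T (psiFix m) (psiFix l), g ≤ codeSum m - codeSum (l + 1)) ∧
    ((psiFix m, psiFix l) ∈ S → m = l)

/-- A pair in `S` forces `a = b` in `GapBound.three_mul_add`, and then its hypothesis
`3 * a + r < 3 * b + t` gives `r < t`. -/
def StepValid (T : Fin 10 → Fin 10 → Option ℤ) (S : List (Fin 10 × Fin 10))
    (T' : Fin 10 → Fin 10 → Option ℤ) (S' : List (Fin 10 × Fin 10)) (r t : ℕ) : Prop :=
  ∀ x y, ∀ g ∈ T x y, ((x, y) ∈ S → r < t) →
    (∃ g' ∈ T' (psiAt x r) (psiAt y t), g' ≤ g + headCode x r + codeC y - headCode y (t + 1)) ∧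
      (psiAt x r, psiAt y t) ∉ S'

instance (T S T' S' r t) : Decidable (StepValid T S T' S' r t) := by
  unfold StepValid; infer_instance

theorem runGap_stepValid : ∀ r < 3, ∀ t < 3, StepValid runGap runSingle runGap runSingle r t := by
  decide

theorem palGap_stepValid :
    ∀ r < 3, ∀ t < 3, r + t = 2 → StepValid palGap palSingle palGap palSingle r t := by
  decide

theorem runGap_palGap_stepValid :
    ∀ r < 3, ∀ t < 3, r + t ≠ 2 → StepValid runGap runSingle palGap palSingle r t := by
  decide

variable {T T' : Fin 10 → Fin 10 → Option ℤ} {S S' : List (Fin 10 × Fin 10)}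

theorem GapBound.self {m : ℕ} (h : ∃ g ∈ T (psiFix m) (psiFix m), g ≤ -codeC (psiFix m)) :
    GapBound T S m m :=
  ⟨by simpa [codeSum_succ] using h, fun _ => rfl⟩

theorem GapBound.three_mul_add {a b r t : ℕ} (h : GapBound T S a b) (hr : r < 3) (ht : t < 3)
    (hlen : 3 * a + r < 3 * b + t) (hstep : StepValid T S T' S' r t) :
    GapBound T' S' (3 * a + r) (3 * b + t) := by
  obtain ⟨⟨g, hg, hgle⟩, hS⟩ := h
  obtain ⟨⟨g', hg', hg'le⟩, hS'⟩ := hstep _ _ g hg fun hxy => by have := hS hxy; omega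
  unfold GapBound
  rw [psiFix_three_mul_add a hr, psiFix_three_mul_add b ht]
  refine ⟨⟨g', hg', ?_⟩, fun h => absurd h hS'⟩
  rw [codeSum_three_mul_add a hr.le, add_assoc, codeSum_three_mul_add b (by omega : t + 1 ≤ 3)]
  rw [codeSum_succ] at hgle
  linarith

theorem gapBound_run {u l : ℕ} (hul : u ≤ l) (H : AllB u (l + 1)) :
    GapBound runGap runSingle u l := by
  induction l using Nat.strong_induction_on generalizing u with
  | _ l ih =>
    rcases (by omega : u = l ∨ u + 1 = l ∨ u + 2 ≤ l) with rfl | rfl | hlen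
    · have single : ∀ x, toSierpinski x = true → ∃ g ∈ runGap x x, g ≤ -codeC x := by decide
      exact GapBound.self (single _ (sW_eq_toSierpinski u ▸ H u le_rfl (by omega)))
    · have pair : ∀ x y, (x, y) ∈ adjacentPairs → toSierpinski x = true → toSierpinski y = true →
          (∃ g ∈ runGap x y, g ≤ -codeC x - codeC y) ∧ (x, y) ∉ runSingle := by decide
      obtain ⟨⟨g, hg, hgle⟩, hS⟩ := pair _ _ (psiFix_adjacent u)
        (sW_eq_toSierpinski u ▸ H u le_rfl (by omega))
        (sW_eq_toSierpinski (u + 1) ▸ H (u + 1) (by omega) (by omega))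
      refine ⟨⟨g, hg, ?_⟩, fun h => absurd h hS⟩
      rw [codeSum_succ, codeSum_succ]
      linarith
    · obtain ⟨a, r, hr, rfl⟩ : ∃ a r, r < 3 ∧ u = 3 * a + r := ⟨u / 3, u % 3, by omega, by omega⟩
      obtain ⟨b, t, ht, rfl⟩ : ∃ b t, t < 3 ∧ l = 3 * b + t := ⟨l / 3, l % 3, by omega, by omega⟩
      exact (ih b (by omega) (by omega) (H.of_three_mul_add hr hlen)).three_mul_add hr ht
        (by omega) (runGap_stepValid r hr t ht)

theorem allB_or_of_isPalFactor_three_mul_add {a b r t : ℕ} (hr : r < 3) (ht : t < 3)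
    (hrt : r + t ≠ 2) (hlt : 3 * a + r < 3 * b + t)
    (H : IsPalFactor sW (3 * a + r) (3 * b + t + 1)) :
    AllB a (b + 1) ∨ (r = 1 ∧ t = 0) ∨ (r = 2 ∧ t = 1 ∧ b = a + 1) := by
  interval_cases r <;> interval_cases t <;> simp only [add_zero] at H hrt ⊢
  · exact .inl (allB_of_isPalFactor_three_mul_three_mul_add_one H (by omega))
  · exact .inl (allB_of_isPalFactor_three_mul_three_mul_add_two H)
  · omega
  · simp
  · omega
  · exact .inl (allB_of_isPalFactor_three_mul_add_one_three_mul_add_three H)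
  · omega
  · rcases (by omega : b = a + 1 ∨ a + 2 ≤ b) with rfl | hab
    · simp
    · exact .inl (allB_of_isPalFactor_three_mul_add_two_three_mul_add_two H hab)
  · exact .inl (allB_of_isPalFactor_three_mul_add_two_three_mul_add_three H (by omega))

theorem gapBound_pal_three_mul_add_one_three_mul {a b : ℕ}
    (H : IsPalFactor sW (3 * a + 1) (3 * b + 1)) (hab : a < b) :
    GapBound palGap palSingle (3 * a + 1) (3 * b) := by
  obtain ⟨hrun, hmid⟩ := allB_of_isPalFactor_three_mul_add_one_three_mul_add_one H hab
  have hadj := psiFix_adjacent a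
  have middle : ∀ x y, (psiAt x 1, y) ∉ palSingle := by decide
  unfold GapBound
  rw [psiFix_three_mul_add a (by norm_num), ← add_zero (3 * b),
    psiFix_three_mul_add b (by norm_num), codeSum_three_mul_add a (by norm_num), add_assoc,
    codeSum_three_mul_add b (by norm_num)]
  refine ⟨?_, fun h => absurd h (middle _ _)⟩
  rcases (by omega : b = a + 1 ∨ a + 2 ≤ b) with rfl | hab
  · have bab : ∀ x y, (x, y) ∈ adjacentPairs → toSierpinski y = true →
        ∃ g ∈ palGap (psiAt x 1) (psiAt y 0), g ≤ headCode x 1 - codeC x - headCode y 1 := by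
      decide
    obtain ⟨g, hg, hgle⟩ := bab _ _ hadj (sW_eq_toSierpinski _ ▸ hrun (a + 1) le_rfl (by omega))
    refine ⟨g, hg, ?_⟩
    rw [codeSum_succ]
    linarith
  · have long : ∀ x x₁ y, (x, x₁) ∈ adjacentPairs → toSierpinski x = true → ∀ g ∈ runGap x₁ y,
        ∃ g' ∈ palGap (psiAt x 1) (psiAt y 0),
          g' ≤ g - codeC x + headCode x 1 + codeC y - headCode y 1 := by
      decide
    have hsa : sW a = true := hmid ▸ hrun (b - 1) (by omega) (by omega)
    obtain ⟨⟨g, hg, hgle⟩, -⟩ := gapBound_run (by omega) hrun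
    obtain ⟨g', hg', hg'le⟩ := long _ _ _ hadj (sW_eq_toSierpinski a ▸ hsa) g hg
    refine ⟨g', hg', ?_⟩
    rw [codeSum_succ, codeSum_succ] at hgle
    linarith

theorem gapBound_pal_three_mul_add_two_three_mul_add_four {a : ℕ}
    (H : IsPalFactor sW (3 * a + 2) (3 * a + 5)) :
    GapBound palGap palSingle (3 * a + 2) (3 * a + 4) := by
  have hsa : sW a = true := by
    have := H (3 * a + 2) le_rfl (by omega)
    rwa [sW_three_mul_add_two, show 3 * a + 2 + (3 * a + 5) - 1 - (3 * a + 2) = 3 * (a + 1) + 1 by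
      omega, sW_three_mul_add_one] at this
  have bab : ∀ x y, (x, y) ∈ adjacentPairs → toSierpinski x = true →
      ∃ g ∈ palGap (psiAt x 2) (psiAt y 1), g ≤ headCode x 2 - codeC x - headCode y 2 := by
    decide
  have middle : ∀ x y, (x, psiAt y 1) ∉ palSingle := by decide
  obtain ⟨g, hg, hgle⟩ := bab _ _ (psiFix_adjacent a) (sW_eq_toSierpinski a ▸ hsa)
  unfold GapBound
  rw [psiFix_three_mul_add a (by norm_num), show 3 * a + 4 = 3 * (a + 1) + 1 by ring,
    psiFix_three_mul_add _ (by norm_num), codeSum_three_mul_add a (by norm_num), add_assoc,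
    codeSum_three_mul_add _ (by norm_num), codeSum_succ]
  exact ⟨⟨g, hg, by linarith⟩, fun h => absurd h (middle _ _)⟩

theorem gapBound_pal {m l : ℕ} (hml : m ≤ l) (H : IsPalFactor sW m (l + 1)) :
    GapBound palGap palSingle m l := by
  induction l using Nat.strong_induction_on generalizing m with
  | _ l ih =>
    rcases hml.eq_or_lt with rfl | hlt
    · have single : ∀ x, ∃ g ∈ palGap x x, g ≤ -codeC x := by decide
      exact GapBound.self (single _)
    obtain ⟨a, r, hr, rfl⟩ : ∃ a r, r < 3 ∧ m = 3 * a + r := ⟨m / 3, m % 3, by omega, by omega⟩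
    obtain ⟨b, t, ht, rfl⟩ : ∃ b t, t < 3 ∧ l = 3 * b + t := ⟨l / 3, l % 3, by omega, by omega⟩
    by_cases hrt : r + t = 2
    · have hpal := (isPalFactor_three_mul_add_iff hrt hlt.le).mp H
      exact (ih b (by omega) (by omega) hpal).three_mul_add hr ht hlt
        (palGap_stepValid r hr t ht hrt)
    rcases allB_or_of_isPalFactor_three_mul_add hr ht hrt hlt H with
      hrun | ⟨rfl, rfl⟩ | ⟨rfl, rfl, rfl⟩
    · exact (gapBound_run (by omega) hrun).three_mul_add hr ht hlt
        (runGap_palGap_stepValid r hr t ht hrt)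
    · exact gapBound_pal_three_mul_add_one_three_mul H (by omega)
    · exact gapBound_pal_three_mul_add_two_three_mul_add_four H

theorem codeSum_le_of_isPalFactor {m l : ℕ} (hml : m ≤ l) (H : IsPalFactor sW m (l + 1)) :
    codeSum (l + 1) ≤ codeSum m + 1 := by
  obtain ⟨⟨g, hg, hgle⟩, -⟩ := gapBound_pal hml H
  have neg_one_le : ∀ x y, ∀ g ∈ palGap x y, -1 ≤ g := by decide
  linarith [neg_one_le _ _ g hg]

/-- Pairs (last letter of `s[0..l]`, first letter of an optimal last palindrome of it). -/
def witnessPairs : List (Fin 10 × Fin 10) :=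
  [(0, 0), (1, 1), (2, 6), (3, 3), (4, 0), (5, 1), (6, 0), (7, 3), (8, 1), (8, 8), (9, 3), (9, 9)]

/-- Needed because for the pair `(S, B)` the desubstituted palindrome does not lift to a
witness one level up, while this run of `b`'s does. -/
def RunWitness (l : ℕ) : Prop :=
  ∃ a ≤ l, AllB a (l + 1) ∧ codeSum (l + 1) = codeSum a + 1 ∧ psiFix a = 1

structure SuffixWitness (l m : ℕ) : Prop where
  le : m ≤ l
  isPalFactor : IsPalFactor sW m (l + 1)
  codeSum_eq : codeSum (l + 1) = codeSum m + 1
  mem_witnessPairs : (psiFix l, psiFix m) ∈ witnessPairs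
  runWitness : psiFix l = 8 → psiFix m = 1 → RunWitness l

theorem runWitness_of_psiFix_eq_one {b : ℕ} (hb : psiFix b = 1) : RunWitness b := by
  refine ⟨b, le_rfl, fun j h₁ h₂ => ?_, by rw [codeSum_succ, hb]; rfl, hb⟩
  rw [show j = b by omega, sW_eq_toSierpinski, hb]
  rfl

theorem RunWitness.three_mul_add {b t : ℕ} (h : RunWitness b) (hb : psiFix b = 1 ∨ psiFix b = 8)
    (ht : t < 3) : RunWitness (3 * b + t) := by
  obtain ⟨a, hab, hrun, hcode, ha⟩ := h
  have hhead : ∀ y, y = 1 ∨ y = 8 → ∀ t < 3, headCode y (t + 1) = codeC y := by decide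
  refine ⟨3 * a, by omega, hrun.three_mul.mono le_rfl (by omega), ?_, ?_⟩
  · rw [add_assoc, codeSum_three_mul_add b (by omega), hhead _ hb t ht, ← codeSum_succ, hcode,
      ← add_zero (3 * a), codeSum_three_mul_add a (by norm_num)]
    simp [headCode]
  · rw [← add_zero (3 * a), psiFix_three_mul_add a (by norm_num), ha]
    rfl

theorem RunWitness.suffixWitness {l : ℕ} (h : RunWitness l) (hl : psiFix l = 8) :
    ∃ m, SuffixWitness l m := by
  obtain ⟨a, hal, hrun, hcode, ha⟩ := h
  exact ⟨a, hal, hrun.isPalFactor, hcode, by rw [hl, ha]; decide,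
    fun _ _ => ⟨a, hal, hrun, hcode, ha⟩⟩

theorem suffixWitness_self {l : ℕ} (hl : psiFix l ∈ [0, 1, 3]) : SuffixWitness l l := by
  have easy : ∀ z : Fin 10, z ∈ [0, 1, 3] → codeC z = 1 ∧ (z, z) ∈ witnessPairs ∧ z ≠ 8 := by
    decide
  obtain ⟨hcode, hW, hS⟩ := easy _ hl
  refine ⟨le_rfl, fun i h₁ h₂ => by rw [show i = l by omega, show l + (l + 1) - 1 - l = l by omega],
    by rw [codeSum_succ, hcode], hW, fun h => absurd h hS⟩

theorem SuffixWitness.three_mul_add {b mh r t : ℕ} (h : SuffixWitness b mh) (hr : r < 3)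
    (ht : t < 3) (hrt : r + t = 2) (hle : 3 * mh + r ≤ 3 * b + t)
    (hhead : headCode (psiFix b) (t + 1) - codeC (psiFix b) = headCode (psiFix mh) r)
    (hW : (psiAt (psiFix b) t, psiAt (psiFix mh) r) ∈ witnessPairs)
    (hrun : psiAt (psiFix b) t = 8 → psiAt (psiFix mh) r = 1 → RunWitness (3 * b + t)) :
    SuffixWitness (3 * b + t) (3 * mh + r) := by
  obtain ⟨-, hpal, hcode, -, -⟩ := h
  refine ⟨hle, (isPalFactor_three_mul_add_iff hrt hle).mpr hpal, ?_, ?_, ?_⟩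
  · rw [add_assoc, codeSum_three_mul_add b (by omega), codeSum_three_mul_add mh hr.le]
    rw [codeSum_succ] at hcode
    linarith
  · rwa [psiFix_three_mul_add b ht, psiFix_three_mul_add mh hr]
  · rwa [psiFix_three_mul_add b ht, psiFix_three_mul_add mh hr]

theorem SuffixWitness.three_mul_add_two {b mh : ℕ} (h : SuffixWitness b mh) :
    SuffixWitness (3 * b + 2) (3 * mh) := by
  have step : ∀ y x, (y, x) ∈ witnessPairs →
      headCode y 3 - codeC y = headCode x 0 ∧ (psiAt y 2, psiAt x 0) ∈ witnessPairs ∧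
        (psiAt y 2 = 8 → psiAt x 0 = 1 → (y = 1 ∨ y = 8) ∧ x = 1) := by
    decide
  obtain ⟨hhead, hW, hrun⟩ := step _ _ h.mem_witnessPairs
  refine h.three_mul_add (r := 0) (by norm_num) (by norm_num) rfl (by have := h.le; omega) hhead hW
    fun hy hx => ?_
  obtain ⟨hy, hx⟩ := hrun hy hx
  exact (hy.elim runWitness_of_psiFix_eq_one fun hS => h.runWitness hS hx).three_mul_add hy
    (by norm_num)

theorem exists_suffixWitness_three_mul {b mh : ℕ} (h : SuffixWitness b mh)
    (hl : psiFix (3 * b) ∉ [0, 1, 3]) : ∃ m, SuffixWitness (3 * b) m := by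
  rw [← add_zero (3 * b), psiFix_three_mul_add b (by norm_num)] at hl
  by_cases hSB : psiFix b = 8 ∧ psiFix mh = 1
  · have hrun := (h.runWitness hSB.1 hSB.2).three_mul_add (t := 0) (.inr hSB.1) (by norm_num)
    refine hrun.suffixWitness ?_
    rw [psiFix_three_mul_add b (by norm_num), hSB.1]
    rfl
  have step : ∀ y x, (y, x) ∈ witnessPairs → psiAt y 0 ∉ [0, 1, 3] → ¬(y = 8 ∧ x = 1) →
      codeC y ≠ 1 ∧ headCode y 1 - codeC y = headCode x 2 ∧
        (psiAt y 0, psiAt x 2) ∈ witnessPairs ∧ psiAt x 2 ≠ 1 := by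
    decide
  obtain ⟨hne, hhead, hW, hB⟩ := step _ _ h.mem_witnessPairs hl hSB
  have hlt : mh < b := by
    refine lt_of_le_of_ne h.le fun hb => hne ?_
    have := h.codeSum_eq
    rw [hb, codeSum_succ] at this
    linarith
  exact ⟨_, h.three_mul_add (r := 2) (by norm_num) (by norm_num) rfl (by omega) hhead hW
    fun _ hx => absurd hx hB⟩

theorem suffixWitness_three_mul_add_four {c : ℕ} (hc : psiFix (c + 1) = 3 ∨ psiFix (c + 1) = 9) :
    SuffixWitness (3 * c + 4) (3 * c + 2) := by
  have before : ∀ z y, (z, y) ∈ adjacentPairs → y = 3 ∨ y = 9 → z = 8 := by decide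
  have hS := before _ _ (psiFix_adjacent c) hc
  have hlast : psiFix (3 * c + 4) = psiAt (psiFix (c + 1)) 1 := by
    rw [show 3 * c + 4 = 3 * (c + 1) + 1 by ring, psiFix_three_mul_add _ (by norm_num)]
  have hfirst : psiFix (3 * c + 2) = psiAt 8 2 := by rw [psiFix_three_mul_add c (by norm_num), hS]
  have step : ∀ y, y = 3 ∨ y = 9 → headCode y 2 = 1 ∧ (psiAt y 1, psiAt 8 2) ∈ witnessPairs := by
    decide
  obtain ⟨hhead, hW⟩ := step _ hc
  refine ⟨by omega, fun i h₁ h₂ => ?_, ?_, by rwa [hlast, hfirst],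
    fun _ h => absurd h (by rw [hfirst]; decide)⟩
  · have hb : sW (3 * c + 2) = true := by
      rw [sW_three_mul_add_two, sW_eq_toSierpinski, hS]
      rfl
    rcases (by omega : i = 3 * c + 2 ∨ i = 3 * c + 3 ∨ i = 3 * c + 4) with rfl | rfl | rfl
    · rw [hb, show 3 * c + 2 + (3 * c + 4 + 1) - 1 - (3 * c + 2) = 3 * c + 4 by omega,
        show 3 * c + 4 = 3 * (c + 1) + 1 by ring, sW_three_mul_add_one]
    · rw [show 3 * c + 2 + (3 * c + 4 + 1) - 1 - (3 * c + 3) = 3 * c + 3 by omega]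
    · rw [show 3 * c + 2 + (3 * c + 4 + 1) - 1 - (3 * c + 4) = 3 * c + 2 by omega, hb,
        show 3 * c + 4 = 3 * (c + 1) + 1 by ring, sW_three_mul_add_one]
  · rw [show 3 * c + 4 + 1 = 3 * (c + 1) + 2 by ring, codeSum_three_mul_add _ (by norm_num), hhead,
      codeSum_three_mul_add c (by norm_num), codeSum_succ, hS,
      show headCode 8 2 = codeC 8 by decide]

theorem exists_suffixWitness_three_mul_add_one {b mh : ℕ} (h : SuffixWitness b mh)
    (hl : psiFix (3 * b + 1) ∉ [0, 1, 3]) : ∃ m, SuffixWitness (3 * b + 1) m := by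
  have hlast := psiFix_three_mul_add b (r := 1) (by norm_num)
  rw [hlast] at hl
  by_cases hrun : psiFix b = 1 ∨ (psiFix b = 8 ∧ psiFix mh = 1)
  · have hBS : psiFix b = 1 ∨ psiFix b = 8 := hrun.imp_right And.left
    have hb : RunWitness b :=
      hrun.elim runWitness_of_psiFix_eq_one fun hSB => h.runWitness hSB.1 hSB.2
    have middle : ∀ y, y = 1 ∨ y = 8 → psiAt y 1 = 8 := by decide
    exact (hb.three_mul_add hBS (t := 1) (by norm_num)).suffixWitness (by rw [hlast, middle _ hBS])
  by_cases hDS : psiFix b = 3 ∨ psiFix b = 9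
  · rcases b with _ | c
    · rw [psiFix_zero] at hDS
      exact absurd hDS (by decide)
    rw [show 3 * (c + 1) + 1 = 3 * c + 4 by ring]
    exact ⟨_, suffixWitness_three_mul_add_four hDS⟩
  have step : ∀ y x, (y, x) ∈ witnessPairs → psiAt y 1 ∉ [0, 1, 3] → ¬(y = 1 ∨ y = 8 ∧ x = 1) →
      ¬(y = 3 ∨ y = 9) → headCode y 2 - codeC y = headCode x 1 ∧
        (psiAt y 1, psiAt x 1) ∈ witnessPairs ∧ (psiAt y 1 = 8 → psiAt x 1 ≠ 1) := by
    decide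
  obtain ⟨hhead, hW, hB⟩ := step _ _ h.mem_witnessPairs hl hrun hDS
  exact ⟨_, h.three_mul_add (r := 1) (by norm_num) (by norm_num) rfl (by have := h.le; omega) hhead
    hW fun hy hx => absurd hx (hB hy)⟩

theorem exists_suffixWitness (l : ℕ) : ∃ m, SuffixWitness l m := by
  induction l using Nat.strong_induction_on with
  | _ l ih =>
    by_cases heasy : psiFix l ∈ [0, 1, 3]
    · exact ⟨l, suffixWitness_self heasy⟩
    obtain ⟨b, t, ht, rfl⟩ : ∃ b t, t < 3 ∧ l = 3 * b + t := ⟨l / 3, l % 3, by omega, by omega⟩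
    have hl : 3 * b + t ≠ 0 := fun h => heasy (by rw [h, psiFix_zero]; decide)
    obtain ⟨mh, hmh⟩ := ih b (by omega)
    interval_cases t
    · exact exists_suffixWitness_three_mul hmh heasy
    · exact exists_suffixWitness_three_mul_add_one hmh heasy
    · exact ⟨_, hmh.three_mul_add_two⟩

theorem pS_eq_codeSum (n : ℕ) : (pS n : ℤ) = codeSum n := by
  refine PL_prefix_eq_of_isPalFactor codeSum (by simp [codeSum]) ?_ ?_ n
  · intro m n hmn H
    obtain ⟨l, rfl⟩ := Nat.exists_eq_add_one.mpr (hmn.trans_le' (Nat.zero_le m))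
    exact codeSum_le_of_isPalFactor (by omega) H
  · intro n hn
    obtain ⟨l, rfl⟩ := Nat.exists_eq_add_one.mpr hn
    obtain ⟨m, hml, hpal, hcode, -⟩ := exists_suffixWitness l
    exact ⟨m, by omega, hpal, hcode⟩

end Sierpinski

/-- The sequence d_p of first differences of the prefix palindromic length of
the Sierpinski word is c applied to the fixed point ψ^∞(A). -/
theorem dp_automatic (n : ℕ) :
    (pS (n + 1) : ℤ) - (pS n : ℤ) = codeC (psiFix n) := by
  rw [Sierpinski.pS_eq_codeSum, Sierpinski.pS_eq_codeSum, Sierpinski.codeSum_succ]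
  ring
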